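/- The Synchronous TeamQueue combination ⊕_STQ satisfies the Parity property: if x ≺_STQ y then for each i ∈ {1,2} there exists z with x ∼_STQ z and z ≺ᵢ y. -/

import Mathlib

def Tpo {W : Type*} (R : W → W → Prop) : Prop :=
  (∀ x, R x x) ∧ (∀ x y z, R x y → R y z → R x z) ∧ (∀ x y, R x y ∨ R y x)

def strictP {W : Type*} (R : W → W → Prop) (x y : W) : Prop := R x y ∧ ¬ R y x

def symmP {W : Type*} (R : W → W → Prop) (x y : W) : Prop := R x y ∧ R y x

def minSet {W : Type*} (R : W → W → Prop) (S : Set W) : Set W := {x | x ∈ S ∧ ∀ y ∈ S, R x y}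

def SVariants {W : Type*} (R1 R2 : W → W → Prop) (S : Set W) : Prop :=
  ∀ x y, ((x ∈ S ∧ y ∈ S) ∨ (x ∉ S ∧ y ∉ S)) → (R1 x y ↔ R2 x y)

def STQrest {W : Type*} (R1 R2 : W → W → Prop) : ℕ → Set W
  | 0 => Set.univ
  | n+1 => STQrest R1 R2 n \ (minSet R1 (STQrest R1 R2 n) ∪ minSet R2 (STQrest R1 R2 n))

/-- x is at least as plausible as y in the STQ combination: x's cell index ≤ y's cell index. -/
def STQle {W : Type*} (R1 R2 : W → W → Prop) (x y : W) : Prop :=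
  ∀ n, x ∈ STQrest R1 R2 n → y ∈ STQrest R1 R2 n

/-! A world `x` that is strictly below `y` leaves the STQ remainders at some stage `k` at which `y`
is still present. Any `≼ᵢ`-minimal world `z` of the remainder at stage `k` leaves at the same stage,
so `x ∼ z`; and `z ≺ᵢ y`, since otherwise `y` would be `≼ᵢ`-minimal at stage `k` as well and would
have left too. -/

section

variable {W : Type*}

theorem Tpo.wellFounded_strictP [Finite W] {R : W → W → Prop} (hR : Tpo R) :
    WellFounded (strictP R) :=
  haveI : IsTrans W (strictP R) :=
    ⟨fun x y z hxy hyz => ⟨hR.2.1 x y z hxy.1 hyz.1, fun hzx => hyz.2 (hR.2.1 z x y hzx hxy.1)⟩⟩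
  haveI : Std.Irrefl (strictP R) := ⟨fun _ hx => hx.2 hx.1⟩
  Finite.wellFounded_of_trans_of_irrefl _

theorem Tpo.minSet_nonempty [Finite W] {R : W → W → Prop} (hR : Tpo R) {S : Set W}
    (hS : S.Nonempty) : (minSet R S).Nonempty := by
  obtain ⟨m, hm, hmin⟩ := hR.wellFounded_strictP.has_min S hS
  refine ⟨m, hm, fun y hy => ?_⟩
  by_contra hmy
  exact hmin y hy ⟨(hR.2.2 m y).resolve_left hmy, hmy⟩

theorem Tpo.mem_minSet_of_le {R : W → W → Prop} (hR : Tpo R) {S : Set W} {y z : W}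
    (hz : z ∈ minSet R S) (hy : y ∈ S) (hyz : R y z) : y ∈ minSet R S :=
  ⟨hy, fun w hw => hR.2.1 y z w hyz (hz.2 w hw)⟩

variable (R1 R2 : W → W → Prop)

theorem STQrest_antitone : Antitone (STQrest R1 R2) :=
  antitone_nat_of_succ_le fun _ => Set.sdiff_subset

theorem STQrest_comm (n : ℕ) : STQrest R1 R2 n = STQrest R2 R1 n := by
  induction n with
  | zero => rfl
  | succ n ih => simp only [STQrest, ih, Set.union_comm]

theorem STQle_comm : STQle R1 R2 = STQle R2 R1 := by
  funext x y
  simp only [STQle, STQrest_comm R1 R2]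

variable {R1 R2}

theorem STQle_of_notMem_succ {x y : W} {k : ℕ} (hx : x ∉ STQrest R1 R2 (k + 1))
    (hy : y ∈ STQrest R1 R2 k) : STQle R1 R2 x y := by
  intro n hxn
  have hnk : n ≤ k := by
    by_contra! hkn
    exact hx (STQrest_antitone R1 R2 hkn hxn)
  exact STQrest_antitone R1 R2 hnk hy

theorem exists_leaves_STQrest_of_not_STQle {x y : W} (hyx : ¬ STQle R1 R2 y x) :
    ∃ k, x ∈ STQrest R1 R2 k ∧ x ∉ STQrest R1 R2 (k + 1) ∧ y ∈ STQrest R1 R2 (k + 1) := by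
  classical
  simp only [STQle, not_forall] at hyx
  obtain ⟨n, hyn, hxn⟩ := hyx
  have hleaves : ∃ n, x ∉ STQrest R1 R2 n := ⟨n, hxn⟩
  obtain ⟨k, hk⟩ : ∃ k, Nat.find hleaves = k + 1 :=
    Nat.exists_eq_succ_of_ne_zero fun h0 => by
      simpa [h0, STQrest] using Nat.find_spec hleaves
  refine ⟨k, ?_, hk ▸ Nat.find_spec hleaves, ?_⟩
  · exact not_not.mp (Nat.find_min hleaves (by omega))
  · exact STQrest_antitone R1 R2 (hk ▸ Nat.find_min' hleaves hxn) hyn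

theorem exists_symmP_STQle_strictP_of_not_STQle [Finite W] (h1 : Tpo R1) {x y : W}
    (hyx : ¬ STQle R1 R2 y x) : ∃ z, symmP (STQle R1 R2) x z ∧ strictP R1 z y := by
  obtain ⟨k, hxk, hxk', hyk'⟩ := exists_leaves_STQrest_of_not_STQle hyx
  have hyk : y ∈ STQrest R1 R2 k := STQrest_antitone R1 R2 k.le_succ hyk'
  obtain ⟨z, hz⟩ := h1.minSet_nonempty ⟨y, hyk⟩
  have hzk' : z ∉ STQrest R1 R2 (k + 1) := fun hz' => hz'.2 (Or.inl hz)
  refine ⟨z, ⟨STQle_of_notMem_succ hxk' hz.1, STQle_of_notMem_succ hzk' hxk⟩, hz.2 y hyk, ?_⟩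
  exact fun hyz => hyk'.2 (Or.inl (h1.mem_minSet_of_le hz hyk hyz))

end

theorem stmt12_general {W : Type*} [Fintype W]
    (R1 R2 : W → W → Prop) (h1 : Tpo R1) (h2 : Tpo R2) :
    ∀ x y : W, strictP (STQle R1 R2) x y →
      (∃ z, symmP (STQle R1 R2) x z ∧ strictP R1 z y) ∧
      (∃ z, symmP (STQle R1 R2) x z ∧ strictP R2 z y) := by
  intro x y hxy
  refine ⟨exists_symmP_STQle_strictP_of_not_STQle h1 hxy.2, ?_⟩
  rw [STQle_comm R1 R2] at hxy ⊢
  exact exists_symmP_STQle_strictP_of_not_STQle h2 hxy.2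

theorem stmt12 {W : Type*} [Fintype W] [Nonempty W]
    (R1 R2 : W → W → Prop) (h1 : Tpo R1) (h2 : Tpo R2) :
    ∀ x y : W, strictP (STQle R1 R2) x y →
      (∃ z, symmP (STQle R1 R2) x z ∧ strictP R1 z y) ∧
      (∃ z, symmP (STQle R1 R2) x z ∧ strictP R2 z y) :=
  stmt12_general R1 R2 h1 h2
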